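/- arXiv:2511.15213 — 4 statements merged into one kernel-verified Lean document; each statement's English description precedes it below -/
import Mathlib

section
/- Let Γ ⊆ ℝⁿ be an n-attractor, the attractor of an IFS s₁,…,s_M with contraction ratios ρ₁,…,ρ_M. Then (i) Γ is an n-set, and (ii) for all m ≠ m' the Lebesgue measure of s_m(Γ) ∩ s_{m'}(Γ) is zero. -/
open Metric MeasureTheory Set Module

/-!
A similarity of ratio `ρ` scales Lebesgue measure on `ℝⁿ` by `ρⁿ`. Since `∑ ρₘⁿ = 1` and the
pieces `sₘ(O)` are disjoint, the Hutchinson operator `H A = ⋃ sₘ(A)` preserves the volume of `O`,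
so `O \ H(O)`, and then every `O \ Hᵏ(O)`, is null. Points of `Hᵏ(O)` are at distance
`≲ (max ρ)ᵏ` from `Γ`, so `O ⊆ Γ` up to a null set, and the same holds for every image `g(O)`
under a composition `g = s_{m₁} ∘ ⋯ ∘ s_{mₖ}`. Given `x ∈ Γ` and `r`, follow an address of `x`
until the ratio of `g` first drops below `r`; it is then still `≥ (min ρ) · r`, and `g(O)` is a
piece of `Γ ∩ B(x, r)` of volume `≳ rⁿ`. For the overlaps: `|Γ| = ∑ |sₘ(Γ)|` by the ratio
condition while `Γ = ⋃ sₘ(Γ)`, so two pieces cannot meet in positive measure.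
-/

section Similarity

variable {X : Type*} [MetricSpace X] {f : X → X} {ρ : ℝ}

theorem lipschitzWith_of_dist_eq_mul (hf : ∀ x y, dist (f x) (f y) = ρ * dist x y) :
    LipschitzWith ρ.toNNReal f :=
  LipschitzWith.of_dist_le' fun x y => (hf x y).le

theorem antilipschitzWith_of_dist_eq_mul (hρ : 0 < ρ)
    (hf : ∀ x y, dist (f x) (f y) = ρ * dist x y) : AntilipschitzWith ρ⁻¹.toNNReal f :=
  AntilipschitzWith.of_le_mul_dist fun x y => by
    rw [Real.coe_toNNReal _ (inv_nonneg.2 hρ.le), hf, inv_mul_cancel_left₀ hρ.ne']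

theorem hausdorffMeasure_image_of_dist_eq_mul [MeasurableSpace X] [BorelSpace X] (hρ : 0 < ρ)
    (hf : ∀ x y, dist (f x) (f y) = ρ * dist x y) {d : ℝ} (hd : 0 ≤ d) (S : Set X) :
    μH[d] (f '' S) = ENNReal.ofReal ρ ^ d * μH[d] S := by
  refine le_antisymm ((lipschitzWith_of_dist_eq_mul hf).hausdorffMeasure_image_le hd S) ?_
  have h := (antilipschitzWith_of_dist_eq_mul hρ hf).le_hausdorffMeasure_image hd S
  have hpos : ENNReal.ofReal ρ ^ d ≠ 0 := by simp [hρ]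
  have hfin : ENNReal.ofReal ρ ^ d ≠ ⊤ := by simp [hd]
  change μH[d] S ≤ ENNReal.ofReal ρ⁻¹ ^ d * _ at h
  rwa [ENNReal.ofReal_inv_of_pos hρ, ENNReal.inv_rpow, ← ENNReal.div_eq_inv_mul,
    ENNReal.le_div_iff_mul_le (.inl hpos) (.inl hfin), mul_comm] at h

theorem volume_image_of_dist_eq_mul {E : Type*} [NormedAddCommGroup E] [InnerProductSpace ℝ E]
    [FiniteDimensional ℝ E] [MeasurableSpace E] [BorelSpace E] {f : E → E} (hρ : 0 < ρ)
    (hf : ∀ x y, dist (f x) (f y) = ρ * dist x y) (S : Set E) :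
    volume (f '' S) = ENNReal.ofReal (ρ ^ finrank ℝ E) * volume S := by
  rw [← InnerProductSpace.euclideanHausdorffMeasure_eq_volume,
    Measure.euclideanHausdorffMeasure_def, Measure.smul_apply, Measure.smul_apply,
    hausdorffMeasure_image_of_dist_eq_mul hρ hf (Nat.cast_nonneg _), ENNReal.rpow_natCast,
    ← ENNReal.ofReal_pow hρ.le]
  exact mul_smul_comm (_ : NNReal) (_ : ENNReal) _

theorem measurableEmbedding_of_dist_eq_mul [MeasurableSpace X] [BorelSpace X] [PolishSpace X]
    (hρ : 0 < ρ) (hf : ∀ x y, dist (f x) (f y) = ρ * dist x y) : MeasurableEmbedding f :=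
  (lipschitzWith_of_dist_eq_mul hf).continuous.measurableEmbedding
    (antilipschitzWith_of_dist_eq_mul hρ hf).injective

end Similarity

theorem measure_inter_eq_zero_of_sum_le_measure_iUnion {α ι : Type*} [MeasurableSpace α]
    {μ : Measure α} [Fintype ι] [DecidableEq ι] {A : ι → Set α} (hA : ∀ i, MeasurableSet (A i))
    (hsum : ∑ i, μ (A i) ≤ μ (⋃ i, A i)) (hfin : μ (⋃ i, A i) ≠ ⊤) {i j : ι} (hij : i ≠ j) :
    μ (A i ∩ A j) = 0 := by
  set B := ⋃ k ∈ Finset.univ.erase j, A k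
  have hiB : A i ⊆ B :=
    Finset.subset_set_biUnion_of_mem (Finset.mem_erase.2 ⟨hij, Finset.mem_univ i⟩)
  have hunion : ⋃ k, A k = B ∪ A j := by
    rw [union_comm, ← Finset.set_biUnion_insert, Finset.insert_erase (Finset.mem_univ j)]
    simp
  refine nonpos_iff_eq_zero.1 (ENNReal.le_of_add_le_add_left hfin ?_)
  calc μ (⋃ k, A k) + μ (A i ∩ A j) ≤ μ (B ∪ A j) + μ (B ∩ A j) := by
        rw [hunion]; gcongr
    _ = μ B + μ (A j) := measure_union_add_inter B (hA j)
    _ ≤ ∑ k ∈ Finset.univ.erase j, μ (A k) + μ (A j) := by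
        gcongr; exact measure_biUnion_finset_le _ _
    _ = ∑ k, μ (A k) := Finset.sum_erase_add _ _ (Finset.mem_univ j)
    _ ≤ μ (⋃ k, A k) + 0 := by rw [add_zero]; exact hsum

section Hutchinson

variable {X ι : Type*}

def hutchinson (s : ι → X → X) (A : Set X) : Set X := ⋃ i, s i '' A

variable {s : ι → X → X}

theorem hutchinson_subset_iff {A B : Set X} : hutchinson s A ⊆ B ↔ ∀ i, MapsTo (s i) A B := by
  simp only [hutchinson, iUnion_subset_iff, image_subset_iff]
  rfl

theorem mem_hutchinson_iterate_succ {A : Set X} {k : ℕ} {x : X} :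
    x ∈ (hutchinson s)^[k + 1] A ↔ ∃ i, ∃ y ∈ (hutchinson s)^[k] A, s i y = x := by
  rw [Function.iterate_succ_apply']
  simp [hutchinson]

theorem measure_diff_hutchinson_iterate_eq_zero [MeasurableSpace X] [Countable ι]
    {μ : Measure X} {A : Set X} (hs : ∀ i N, μ N = 0 → μ (s i '' N) = 0)
    (h : μ (A \ hutchinson s A) = 0) (k : ℕ) : μ (A \ (hutchinson s)^[k] A) = 0 := by
  induction k with
  | zero => simp
  | succ k ih =>
    refine measure_mono_null (t := (A \ hutchinson s A) ∪ ⋃ i, s i '' (A \ (hutchinson s)^[k] A))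
      ?_ (measure_union_null h (measure_iUnion_null fun i => hs i _ ih))
    rintro z ⟨hzA, hz⟩
    by_cases hzH : z ∈ hutchinson s A
    · obtain ⟨i, y, hy, rfl⟩ := mem_iUnion.1 hzH
      refine .inr (mem_iUnion.2 ⟨i, y, ⟨hy, fun hyk => hz ?_⟩, rfl⟩)
      exact mem_hutchinson_iterate_succ.2 ⟨i, y, hyk, rfl⟩
    · exact .inl ⟨hzA, hzH⟩

variable [MetricSpace X] {ρ : ι → ℝ} {Γ : Set X}

theorem exists_dist_le_of_mem_hutchinson_iterate {A : Set X} {b C : ℝ} (hρ : ∀ i, 0 ≤ ρ i)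
    (hρb : ∀ i, ρ i ≤ b) (hsim : ∀ i x y, dist (s i x) (s i y) = ρ i * dist x y)
    (hΓ : hutchinson s Γ ⊆ Γ) (hA : ∀ x ∈ A, ∃ γ ∈ Γ, dist x γ ≤ C) (k : ℕ) :
    ∀ x ∈ (hutchinson s)^[k] A, ∃ γ ∈ Γ, dist x γ ≤ b ^ k * C := by
  induction k with
  | zero => simpa using hA
  | succ k ih =>
    intro x hx
    obtain ⟨i, y, hy, rfl⟩ := mem_hutchinson_iterate_succ.1 hx
    obtain ⟨γ, hγ, hyγ⟩ := ih y hy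
    refine ⟨s i γ, hutchinson_subset_iff.1 hΓ i hγ, ?_⟩
    rw [hsim, pow_succ', mul_assoc]
    exact mul_le_mul (hρb i) hyγ dist_nonneg ((hρ i).trans (hρb i))

theorem iInter_hutchinson_iterate_subset {A : Set X} {b C : ℝ} (hρ : ∀ i, 0 ≤ ρ i)
    (hρb : ∀ i, ρ i ≤ b) (hb0 : 0 ≤ b) (hb1 : b < 1)
    (hsim : ∀ i x y, dist (s i x) (s i y) = ρ i * dist x y) (hΓc : IsClosed Γ)
    (hΓ : hutchinson s Γ ⊆ Γ) (hA : ∀ x ∈ A, ∃ γ ∈ Γ, dist x γ ≤ C) :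
    ⋂ k, (hutchinson s)^[k] A ⊆ Γ := by
  intro x hx
  rw [← hΓc.closure_eq, Metric.mem_closure_iff]
  intro ε hε
  have hlim := (tendsto_pow_atTop_nhds_zero_of_lt_one hb0 hb1).mul_const C
  rw [zero_mul] at hlim
  obtain ⟨k, hk⟩ := (hlim.eventually (gt_mem_nhds hε)).exists
  obtain ⟨γ, hγ, hxγ⟩ := exists_dist_le_of_mem_hutchinson_iterate hρ hρb hsim hΓ hA k x
    (mem_iInter.1 hx k)
  exact ⟨γ, hγ, hxγ.trans_lt hk⟩

theorem exists_similarity_mapsTo_mem_image {a b : ℝ} (ha : 0 ≤ a) (hρa : ∀ i, a ≤ ρ i)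
    (hρb : ∀ i, ρ i ≤ b) (hb0 : 0 ≤ b) (hb1 : b < 1)
    (hsim : ∀ i x y, dist (s i x) (s i y) = ρ i * dist x y) (hΓ : hutchinson s Γ = Γ)
    {x : X} (hx : x ∈ Γ) {r : ℝ} (hr0 : 0 < r) (har : a * r ≤ 1) :
    ∃ g : X → X, ∃ t, a * r ≤ t ∧ t ≤ r ∧ (∀ y z, dist (g y) (g z) = t * dist y z) ∧
      MapsTo g Γ Γ ∧ x ∈ g '' Γ := by
  suffices descend : ∀ (k : ℕ) (g : X → X) (t : ℝ), (∀ y z, dist (g y) (g z) = t * dist y z) →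
      MapsTo g Γ Γ → x ∈ g '' Γ → a * r ≤ t → t * b ^ k ≤ r →
      ∃ g : X → X, ∃ t, a * r ≤ t ∧ t ≤ r ∧ (∀ y z, dist (g y) (g z) = t * dist y z) ∧
        MapsTo g Γ Γ ∧ x ∈ g '' Γ by
    obtain ⟨k, hk⟩ := exists_pow_lt_of_lt_one hr0 hb1
    exact descend k id 1 (by simp) (mapsTo_id Γ) (by simpa) har (by simpa using hk.le)
  intro k
  induction k with
  | zero =>
    intro g t hg hgΓ hxg hat htr
    exact ⟨g, t, hat, by simpa using htr, hg, hgΓ, hxg⟩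
  | succ k ih =>
    intro g t hg hgΓ hxg hat htr
    rcases le_or_gt t r with hrt | hrt
    · exact ⟨g, t, hat, hrt, hg, hgΓ, hxg⟩
    obtain ⟨y, hy, rfl⟩ := hxg
    rw [← hΓ] at hy
    obtain ⟨i, z, hz, rfl⟩ := mem_iUnion.1 hy
    have ht0 : 0 ≤ t := hr0.le.trans hrt.le
    refine ih (g ∘ s i) (t * ρ i) (fun y z => ?_) (hgΓ.comp (hutchinson_subset_iff.1 hΓ.le i))
      ⟨z, hz, rfl⟩ ?_ ?_
    · simp only [Function.comp_apply, hg, hsim, mul_assoc]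
    · calc a * r ≤ a * t := by gcongr
        _ ≤ t * ρ i := by rw [mul_comm]; gcongr; exact hρa i
    · calc t * ρ i * b ^ k ≤ t * b * b ^ k := by gcongr; exact hρb i
        _ = t * b ^ (k + 1) := by ring
        _ ≤ r := htr

end Hutchinson

section Volume

variable {E ι : Type*} [NormedAddCommGroup E] [InnerProductSpace ℝ E] [FiniteDimensional ℝ E]
  [MeasurableSpace E] [BorelSpace E] [Fintype ι] {s : ι → E → E} {ρ : ι → ℝ} {Γ : Set E}

theorem sum_volume_image_eq (hρ : ∀ i, 0 < ρ i)
    (hsim : ∀ i x y, dist (s i x) (s i y) = ρ i * dist x y)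
    (hsum : ∑ i, ρ i ^ finrank ℝ E = 1) (A : Set E) : ∑ i, volume (s i '' A) = volume A := by
  simp only [fun i => volume_image_of_dist_eq_mul (hρ i) (hsim i) A]
  rw [← Finset.sum_mul, ← ENNReal.ofReal_sum_of_nonneg fun i _ => pow_nonneg (hρ i).le _, hsum,
    ENNReal.ofReal_one, one_mul]

theorem volume_diff_attractor_eq_zero [Nonempty ι] (hρ : ∀ i, ρ i ∈ Ioo 0 1)
    (hsim : ∀ i x y, dist (s i x) (s i y) = ρ i * dist x y)
    (hsum : ∑ i, ρ i ^ finrank ℝ E = 1) (hΓc : IsClosed Γ) (hΓ : hutchinson s Γ ⊆ Γ)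
    (hΓne : Γ.Nonempty) {O : Set E} (hO : IsOpen O) (hObd : Bornology.IsBounded O)
    (hOsub : hutchinson s O ⊆ O) (hdisj : Pairwise fun i j => Disjoint (s i '' O) (s j '' O)) :
    volume (O \ Γ) = 0 := by
  have hmeas : ∀ i, MeasurableSet (s i '' O) := fun i =>
    (measurableEmbedding_of_dist_eq_mul (hρ i).1 (hsim i)).measurableSet_image.2 hO.measurableSet
  have hvol : volume (hutchinson s O) = volume O := by
    rw [hutchinson, measure_iUnion hdisj hmeas, tsum_fintype,
      sum_volume_image_eq (fun i => (hρ i).1) hsim hsum]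
  have hfirst : volume (O \ hutchinson s O) = 0 := by
    rw [measure_sdiff hOsub (MeasurableSet.iUnion hmeas).nullMeasurableSet
      (hvol ▸ hObd.measure_lt_top.ne), hvol, tsub_self]
  have hnull : ∀ i N, volume N = 0 → volume (s i '' N) = 0 := fun i N hN => by
    rw [volume_image_of_dist_eq_mul (hρ i).1 (hsim i), hN, mul_zero]
  obtain ⟨i₀, hi₀⟩ := Finite.exists_max ρ
  obtain ⟨γ, hγ⟩ := hΓne
  obtain ⟨C, hC⟩ := hObd.subset_closedBall γ
  have hcap := iInter_hutchinson_iterate_subset (fun i => (hρ i).1.le) hi₀ (hρ i₀).1.le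
    (hρ i₀).2 hsim hΓc hΓ (A := O) fun x hx => ⟨γ, hγ, hC hx⟩
  have hsub : O \ Γ ⊆ ⋃ k, O \ (hutchinson s)^[k] O := fun z ⟨hzO, hzΓ⟩ => by
    by_contra hz
    refine hzΓ (hcap (mem_iInter.2 fun k => ?_))
    by_contra hzk
    exact hz (mem_iUnion.2 ⟨k, hzO, hzk⟩)
  exact measure_mono_null hsub
    (measure_iUnion_null (measure_diff_hutchinson_iterate_eq_zero hnull hfirst))

theorem ofReal_pow_mul_volume_le_volume_inter_closedBall {O : Set E} {g : E → E} {t D : ℝ}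
    {x : E} (ht : 0 < t) (hg : ∀ y z, dist (g y) (g z) = t * dist y z) (hgΓ : MapsTo g Γ Γ)
    (hx : x ∈ g '' Γ) (hOΓ : volume (O \ Γ) = 0) (hD : ∀ y ∈ O, ∀ z ∈ Γ, dist y z ≤ D) :
    ENNReal.ofReal (t ^ finrank ℝ E) * volume O ≤ volume (Γ ∩ closedBall x (t * D)) := by
  obtain ⟨y, hy, rfl⟩ := hx
  have hout : volume (g '' O \ Γ) = 0 := by
    refine measure_mono_null (t := g '' (O \ Γ)) ?_ ?_
    · rw [image_sdiff (antilipschitzWith_of_dist_eq_mul ht hg).injective]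
      exact sdiff_subset_sdiff_right hgΓ.image_subset
    · rw [volume_image_of_dist_eq_mul ht hg, hOΓ, mul_zero]
  calc ENNReal.ofReal (t ^ finrank ℝ E) * volume O = volume (g '' O) :=
        (volume_image_of_dist_eq_mul ht hg O).symm
    _ ≤ volume (g '' O ∩ Γ) + volume (g '' O \ Γ) := measure_le_inter_add_sdiff _ _ _
    _ = volume (g '' O ∩ Γ) := by rw [hout, add_zero]
    _ ≤ volume (Γ ∩ closedBall (g y) (t * D)) := by
        refine measure_mono ?_
        rintro _ ⟨⟨z, hz, rfl⟩, hzΓ⟩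
        refine ⟨hzΓ, ?_⟩
        rw [mem_closedBall, hg]
        exact mul_le_mul_of_nonneg_left (hD z hz y hy) ht.le

theorem exists_forall_ofReal_mul_pow_le_volume_inter_closedBall [Nonempty ι]
    (hρ : ∀ i, ρ i ∈ Ioo 0 1) (hsim : ∀ i x y, dist (s i x) (s i y) = ρ i * dist x y)
    (hΓ : hutchinson s Γ = Γ) (hΓbd : Bornology.IsBounded Γ) {O : Set E} (hO : IsOpen O)
    (hOne : O.Nonempty) (hObd : Bornology.IsBounded O) (hOΓ : volume (O \ Γ) = 0) :
    ∃ c : ℝ, 0 < c ∧ ∀ x ∈ Γ, ∀ r : ℝ, 0 < r → r ≤ 1 →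
      ENNReal.ofReal (c * r ^ finrank ℝ E) ≤ volume (Γ ∩ closedBall x r) := by
  obtain ⟨D, hD1, hD⟩ : ∃ D : ℝ, 1 ≤ D ∧ ∀ y ∈ O, ∀ z ∈ Γ, dist y z ≤ D :=
    ⟨max (diam (O ∪ Γ)) 1, le_max_right _ _, fun y hy z hz =>
      (dist_le_diam_of_mem (hObd.union hΓbd) (.inl hy) (.inr hz)).trans (le_max_left _ _)⟩
  have hD0 : 0 < D := one_pos.trans_le hD1
  obtain ⟨a, ha0, ha1, hρa⟩ : ∃ a, 0 < a ∧ a < 1 ∧ ∀ i, a ≤ ρ i :=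
    let ⟨i₀, hi₀⟩ := Finite.exists_min ρ; ⟨ρ i₀, (hρ i₀).1, (hρ i₀).2, hi₀⟩
  obtain ⟨i₁, hi₁⟩ := Finite.exists_max ρ
  have hvol : 0 < (volume O).toReal :=
    ENNReal.toReal_pos (hO.measure_pos volume hOne).ne' hObd.measure_lt_top.ne
  refine ⟨(a / D) ^ finrank ℝ E * (volume O).toReal, by positivity, fun x hx r hr0 hr1 => ?_⟩
  have har : a * (r / D) ≤ 1 :=
    mul_le_one₀ ha1.le (by positivity) (div_le_one_of_le₀ (hr1.trans hD1) hD0.le)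
  obtain ⟨g, t, hat, htr, hg, hgΓ, hxg⟩ := exists_similarity_mapsTo_mem_image ha0.le hρa hi₁
    (hρ i₁).1.le (hρ i₁).2 hsim hΓ hx (div_pos hr0 hD0) har
  have ht0 : 0 < t := (by positivity : 0 < a * (r / D)).trans_le hat
  calc ENNReal.ofReal ((a / D) ^ finrank ℝ E * (volume O).toReal * r ^ finrank ℝ E)
      ≤ ENNReal.ofReal (t ^ finrank ℝ E * (volume O).toReal) := by
        refine ENNReal.ofReal_le_ofReal ?_
        rw [mul_right_comm, ← mul_pow, div_mul_eq_mul_div, mul_div_assoc]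
        gcongr
    _ = ENNReal.ofReal (t ^ finrank ℝ E) * volume O := by
        rw [ENNReal.ofReal_mul (by positivity), ENNReal.ofReal_toReal hObd.measure_lt_top.ne]
    _ ≤ volume (Γ ∩ closedBall x (t * D)) :=
        ofReal_pow_mul_volume_le_volume_inter_closedBall ht0 hg hgΓ hxg hOΓ hD
    _ ≤ volume (Γ ∩ closedBall x r) := by
        refine measure_mono (inter_subset_inter_right _ (closedBall_subset_closedBall ?_))
        rwa [le_div_iff₀ hD0] at htr

theorem volume_image_inter_image_eq_zero (hρ : ∀ i, 0 < ρ i)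
    (hsim : ∀ i x y, dist (s i x) (s i y) = ρ i * dist x y)
    (hsum : ∑ i, ρ i ^ finrank ℝ E = 1) (hΓ : hutchinson s Γ = Γ) (hΓc : IsCompact Γ)
    {i j : ι} (hij : i ≠ j) : volume (s i '' Γ ∩ s j '' Γ) = 0 := by
  classical
  refine measure_inter_eq_zero_of_sum_le_measure_iUnion (A := fun k => s k '' Γ)
    (fun k => ?_) ?_ ?_ hij
  · exact (hΓc.image (lipschitzWith_of_dist_eq_mul (hsim k)).continuous).isClosed.measurableSet
  · rw [sum_volume_image_eq hρ hsim hsum]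
    exact measure_mono hΓ.ge
  · exact ((measure_mono hΓ.le).trans_lt hΓc.measure_lt_top).ne

end Volume

theorem statement0_general
    (n : ℕ)
    (M : ℕ)
    (s : Fin M → EuclideanSpace ℝ (Fin n) → EuclideanSpace ℝ (Fin n))
    (ρ : Fin M → ℝ)
    (hρ : ∀ m, ρ m ∈ Set.Ioo (0 : ℝ) 1)
    (hsim : ∀ m x y, dist (s m x) (s m y) = ρ m * dist x y)
    (Γ : Set (EuclideanSpace ℝ (Fin n)))
    (hΓne : Γ.Nonempty) (hΓcomp : IsCompact Γ)
    (hattr : Γ = ⋃ m, s m '' Γ)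
    (hOSC : ∃ O : Set (EuclideanSpace ℝ (Fin n)), O.Nonempty ∧ IsOpen O ∧
      Bornology.IsBounded O ∧ (⋃ m, s m '' O) ⊆ O ∧
      ∀ m m', m ≠ m' → Disjoint (s m '' O) (s m' '' O))
    (hsum : ∑ m, ρ m ^ n = 1) :
    (∃ c : ℝ, 0 < c ∧ ∀ x ∈ Γ, ∀ r : ℝ, 0 < r → r ≤ 1 →
      ENNReal.ofReal (c * r ^ n) ≤ volume (Γ ∩ Metric.closedBall x r)) ∧
    (∀ m m' : Fin M, m ≠ m' → volume (s m '' Γ ∩ s m' '' Γ) = 0) := by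
  obtain ⟨O, hOne, hO, hObd, hOsub, hdisj⟩ := hOSC
  have hΓ : hutchinson s Γ = Γ := hattr.symm
  have hsum' : ∑ m, ρ m ^ finrank ℝ (EuclideanSpace ℝ (Fin n)) = 1 := by
    rwa [finrank_euclideanSpace_fin]
  have : Nonempty (Fin M) := by
    obtain ⟨x, hx⟩ := hΓne
    rw [← hΓ] at hx
    obtain ⟨m, -⟩ := mem_iUnion.1 hx
    exact ⟨m⟩
  have hOΓ := volume_diff_attractor_eq_zero hρ hsim hsum' hΓcomp.isClosed hΓ.le hΓne hO hObd
    hOsub hdisj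
  refine ⟨?_, fun m m' =>
    volume_image_inter_image_eq_zero (fun m => (hρ m).1) hsim hsum' hΓ hΓcomp⟩
  simpa only [finrank_euclideanSpace_fin] using
    exists_forall_ofReal_mul_pow_le_volume_inter_closedBall hρ hsim hΓ hΓcomp.isBounded hO hOne
      hObd hOΓ

/-- An n-attractor Γ (attractor of an IFS of contracting similarities
satisfying the OSC, with ∑ ρₘⁿ = 1) is an n-set, and the overlaps sₘ(Γ) ∩ sₘ'(Γ)
have zero Lebesgue measure for m ≠ m'. -/
theorem statement0
    (n : ℕ) (hn : 1 ≤ n)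
    (M : ℕ) (hM : 2 ≤ M)
    (s : Fin M → EuclideanSpace ℝ (Fin n) → EuclideanSpace ℝ (Fin n))
    (ρ : Fin M → ℝ)
    (hρ : ∀ m, ρ m ∈ Set.Ioo (0 : ℝ) 1)
    (hsim : ∀ m x y, dist (s m x) (s m y) = ρ m * dist x y)
    (Γ : Set (EuclideanSpace ℝ (Fin n)))
    (hΓne : Γ.Nonempty) (hΓcomp : IsCompact Γ)
    (hattr : Γ = ⋃ m, s m '' Γ)
    (hOSC : ∃ O : Set (EuclideanSpace ℝ (Fin n)), O.Nonempty ∧ IsOpen O ∧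
      Bornology.IsBounded O ∧ (⋃ m, s m '' O) ⊆ O ∧
      ∀ m m', m ≠ m' → Disjoint (s m '' O) (s m' '' O))
    (hsum : ∑ m, ρ m ^ n = 1) :
    (∃ c : ℝ, 0 < c ∧ ∀ x ∈ Γ, ∀ r : ℝ, 0 < r → r ≤ 1 →
      ENNReal.ofReal (c * r ^ n) ≤ volume (Γ ∩ Metric.closedBall x r)) ∧
    (∀ m m' : Fin M, m ≠ m' → volume (s m '' Γ ∩ s m' '' Γ) = 0) :=
  statement0_general n M s ρ hρ hsim Γ hΓne hΓcomp hattr hOSC hsum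
end

section
/- Let Γ ⊆ ℝⁿ be an n-attractor with defining IFS s₁,…,s_M, and let O be any non-empty bounded open set satisfying the OSC for this IFS. Then the Hausdorff dimension of the boundary ∂O is strictly less than n, so in particular |∂O| = 0; consequently also dim_H(∂Γ) < n and |∂Γ| = 0. -/
/-!
The open set condition and `∑ ρ_m ^ n = 1` make the pieces `s_m(O)` fill `O` up to an
`H^n`-null set (`H^n` is a Haar measure on `ℝⁿ`); as an open null set is empty, `closure O` is
invariant under the system and hence equals `Γ`. Some cylinder `s_w(closure O)` lies inside `O`,
so `∂O = closure O \ O` is covered by its images under the cylinders of length `|w|` other than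
`w`. This subsystem has `∑ ρ_u ^ n < 1`, hence similarity dimension `d < n`, and iterating the
covering gives `H^d(∂O) < ∞`. Finally `∂Γ = ∂(closure O) ⊆ ∂O`.
-/

open Metric MeasureTheory Set Filter Topology Module Function
open scoped ENNReal NNReal

namespace IFS

section Words

variable {ι X : Type*}

def wordMap (f : ι → X → X) : (k : ℕ) → (Fin k → ι) → X → X
  | 0, _ => id
  | k + 1, σ => f (σ 0) ∘ wordMap f k (Fin.tail σ)

theorem mapsTo_wordMap {f : ι → X → X} {B : Set X} (hB : ∀ i, MapsTo (f i) B B) :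
    ∀ k (σ : Fin k → ι), MapsTo (wordMap f k σ) B B
  | 0, _ => mapsTo_id B
  | k + 1, σ => (hB (σ 0)).comp (mapsTo_wordMap hB k (Fin.tail σ))

theorem subset_iUnion_wordMap_image {f : ι → X → X} {A : Set X} (hA : A ⊆ ⋃ i, f i '' A) :
    ∀ k, A ⊆ ⋃ σ : Fin k → ι, wordMap f k σ '' A
  | 0 => fun x hx => mem_iUnion.2 ⟨Fin.elim0, x, hx, rfl⟩
  | k + 1 => fun x hx => by
    obtain ⟨i, y, hy, rfl⟩ := mem_iUnion.1 (hA hx)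
    obtain ⟨σ, z, hz, rfl⟩ := mem_iUnion.1 (subset_iUnion_wordMap_image hA k hy)
    exact mem_iUnion.2 ⟨Fin.cons i σ, z, hz, by simp [wordMap]⟩

theorem exists_lt_one_prod_le_pow [Fintype ι] {c : ι → ℝ≥0} (hc : ∀ i, c i < 1) :
    ∃ r < 1, ∀ k (σ : Fin k → ι), ∏ j, c (σ j) ≤ r ^ k := by
  refine ⟨Finset.univ.sup c, (Finset.sup_lt_iff zero_lt_one).2 fun i _ => hc i, fun k σ => ?_⟩
  simpa using Finset.prod_le_pow_card Finset.univ (fun j => c (σ j)) _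
    fun j _ => Finset.le_sup (Finset.mem_univ (σ j))

theorem exists_lt_sum_rpow_le_one [Fintype ι] (c : ι → ℝ≥0) {t : ℝ} (ht : 0 < t)
    (h : ∑ i, c i ^ t < 1) : ∃ d, 0 ≤ d ∧ d < t ∧ ∑ i, c i ^ d ≤ 1 := by
  have hcont : Tendsto (fun e : ℝ => ∑ i, c i ^ e) (𝓝 t) (𝓝 (∑ i, c i ^ t)) :=
    tendsto_finsetSum _ fun i _ => tendsto_const_nhds.nnrpow tendsto_id (Or.inr ht)
  obtain ⟨d, hdt, hd0, hd⟩ :=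
    ((eventually_gt_nhds ht).and (hcont.eventually (eventually_lt_nhds h))).exists_lt
  exact ⟨d, hd0.le, hdt, hd.le⟩

end Words

section EMetric

variable {ι X : Type*} [EMetricSpace X] {f : ι → X → X} {c : ι → ℝ≥0}

theorem lipschitzWith_wordMap (hf : ∀ i, LipschitzWith (c i) (f i)) :
    ∀ k (σ : Fin k → ι), LipschitzWith (∏ j, c (σ j)) (wordMap f k σ)
  | 0, _ => by simpa [wordMap] using LipschitzWith.id
  | k + 1, σ => by
    rw [Fin.prod_univ_succ]
    exact (hf (σ 0)).comp (lipschitzWith_wordMap hf k (Fin.tail σ))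

variable [MeasurableSpace X] [BorelSpace X] [Fintype ι]

theorem hausdorffMeasure_le_ediam_rpow (hf : ∀ i, LipschitzWith (c i) (f i))
    (hc : ∀ i, c i < 1) {d : ℝ} (hd : 0 ≤ d) (hsum : ∑ i, c i ^ d ≤ 1) {F : Set X}
    (hF : F ⊆ ⋃ i, f i '' F) (hFb : ediam F ≠ ∞) : μH[d] F ≤ ediam F ^ d := by
  obtain ⟨r, hr1, hr⟩ := exists_lt_one_prod_le_pow hc
  have hdiam (k) (σ : Fin k → ι) :
      ediam (wordMap f k σ '' F) ≤ (∏ j, c (σ j) : ℝ≥0) * ediam F :=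
    (lipschitzWith_wordMap hf k σ).ediam_image_le F
  have hlim : Tendsto (fun k : ℕ => (r : ℝ≥0∞) ^ k * ediam F) atTop (𝓝 0) := by
    simpa using ENNReal.Tendsto.mul_const
      (ENNReal.tendsto_pow_atTop_nhds_zero_of_lt_one (by exact_mod_cast hr1)) (Or.inr hFb)
  refine (Measure.hausdorffMeasure_le_liminf_sum d F _ hlim (fun k σ => wordMap f k σ '' F)
    (Eventually.of_forall fun k σ => (hdiam k σ).trans ?_)
    (Eventually.of_forall (subset_iUnion_wordMap_image hF))).trans
    (liminf_le_of_frequently_le' (Frequently.of_forall fun k => ?_))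
  · gcongr
    exact_mod_cast hr k σ
  calc ∑ σ : Fin k → ι, ediam (wordMap f k σ '' F) ^ d
      ≤ ∑ σ : Fin k → ι, (((∏ j, c (σ j)) ^ d : ℝ≥0) : ℝ≥0∞) * ediam F ^ d := by
        gcongr with σ
        rw [ENNReal.coe_rpow_of_nonneg _ hd, ← ENNReal.mul_rpow_of_nonneg _ _ hd]
        gcongr
        exact hdiam k σ
    _ = (((∑ i, c i ^ d) ^ k : ℝ≥0) : ℝ≥0∞) * ediam F ^ d := by
        simp_rw [← NNReal.finsetProd_rpow, Fintype.sum_pow, ← Finset.sum_mul,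
          ENNReal.ofNNReal_finsetSum]
    _ ≤ ediam F ^ d := by
        refine mul_le_of_le_one_left' ?_
        exact_mod_cast pow_le_one₀ bot_le hsum

theorem dimH_lt_of_subset_iUnion_image (hf : ∀ i, LipschitzWith (c i) (f i))
    (hc : ∀ i, c i < 1) {t : ℝ≥0} (ht : 0 < t) (hsum : ∑ i, c i ^ (t : ℝ) < 1) {F : Set X}
    (hF : F ⊆ ⋃ i, f i '' F) (hFb : ediam F ≠ ∞) : dimH F < t := by
  obtain ⟨d, hd0, hdt, hd⟩ := exists_lt_sum_rpow_le_one c ht hsum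
  lift d to ℝ≥0 using hd0
  calc dimH F ≤ d := dimH_le_of_hausdorffMeasure_ne_top
        ((hausdorffMeasure_le_ediam_rpow hf hc d.2 hd hF hFb).trans_lt
          (ENNReal.rpow_lt_top_of_nonneg d.2 hFb)).ne
    _ < t := by exact_mod_cast hdt

/-- `F` is covered by the level-`L` system without the word `w`, whose weights
`(∏ j, c (u j)) ^ t` sum to less than `1`. -/
theorem dimH_lt_of_disjoint_wordMap_image (hf : ∀ i, LipschitzWith (c i) (f i))
    (hc0 : ∀ i, 0 < c i) (hc : ∀ i, c i < 1) {t : ℝ≥0} (ht : 0 < t)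
    (hsum : ∑ i, c i ^ (t : ℝ) = 1) {F : Set X} (hF : F ⊆ ⋃ i, f i '' F) (hFb : ediam F ≠ ∞)
    {L : ℕ} (w : Fin L → ι) (hw : Disjoint F (wordMap f L w '' F)) : dimH F < t := by
  classical
  obtain ⟨r, hr1, hr⟩ := exists_lt_one_prod_le_pow hc
  refine dimH_lt_of_subset_iUnion_image (f := fun u : {u // u ≠ w} => wordMap f L u)
    (c := fun u => ∏ j, c (u.1 j)) (fun u => lipschitzWith_wordMap hf L u) ?_ ht ?_ ?_ hFb
  · rintro ⟨u, hu⟩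
    cases L with
    | zero => exact absurd (Subsingleton.elim u w) hu
    | succ L => exact (hr _ u).trans_lt (pow_lt_one₀ bot_le hr1 L.succ_ne_zero)
  · have htotal : ∑ u : Fin L → ι, (∏ j, c (u j)) ^ (t : ℝ) = 1 := by
      rw [← one_pow L, ← hsum, Fintype.sum_pow]
      simp_rw [NNReal.finsetProd_rpow]
    have hw0 : 0 < (∏ j, c (w j)) ^ (t : ℝ) :=
      NNReal.rpow_pos (Finset.prod_pos fun j _ => hc0 (w j))
    rw [Fintype.sum_eq_add_sum_subtype_ne _ w] at htotal
    exact htotal ▸ lt_add_of_pos_left _ hw0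
  · intro x hx
    obtain ⟨u, hu⟩ := mem_iUnion.1 (subset_iUnion_wordMap_image hF L hx)
    have huw : u ≠ w := by
      rintro rfl
      exact disjoint_left.1 hw hx hu
    exact mem_iUnion.2 ⟨⟨u, huw⟩, hu⟩

end EMetric

section Metric

variable {ι X : Type*} [Fintype ι] [MetricSpace X] {f : ι → X → X} {c : ι → ℝ≥0}

theorem exists_forall_dist_wordMap_lt (hf : ∀ i, LipschitzWith (c i) (f i))
    (hc : ∀ i, c i < 1) {S : Set X} (hS : Bornology.IsBounded S) {ε : ℝ} (hε : 0 < ε) :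
    ∃ k, ∀ (σ : Fin k → ι), ∀ x ∈ S, ∀ y ∈ S,
      dist (wordMap f k σ x) (wordMap f k σ y) < ε := by
  obtain ⟨r, hr1, hr⟩ := exists_lt_one_prod_le_pow hc
  obtain ⟨C, hC⟩ := isBounded_iff.1 hS
  have hlim : Tendsto (fun k : ℕ => (r : ℝ) ^ k * C) atTop (𝓝 0) := by
    simpa using (tendsto_pow_atTop_nhds_zero_of_lt_one r.2 hr1).mul_const C
  obtain ⟨k, hk⟩ := (hlim.eventually (eventually_lt_nhds hε)).exists
  refine ⟨k, fun σ x hx y hy => ?_⟩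
  calc dist (wordMap f k σ x) (wordMap f k σ y) ≤ (∏ j, c (σ j) : ℝ≥0) * dist x y :=
        (lipschitzWith_wordMap hf k σ).dist_le_mul x y
    _ ≤ (r : ℝ) ^ k * C := by
        gcongr
        · exact_mod_cast hr k σ
        · exact hC hx hy
    _ < ε := hk

theorem subset_of_subset_iUnion_image (hf : ∀ i, LipschitzWith (c i) (f i))
    (hc : ∀ i, c i < 1) {A B : Set X} (hA : A ⊆ ⋃ i, f i '' A) (hAb : Bornology.IsBounded A)
    (hB : IsClosed B) (hBne : B.Nonempty) (hfB : ∀ i, MapsTo (f i) B B) : A ⊆ B := by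
  obtain ⟨b, hb⟩ := hBne
  intro x hx
  refine hB.closure_subset (Metric.mem_closure_iff.2 fun ε hε => ?_)
  obtain ⟨k, hk⟩ := exists_forall_dist_wordMap_lt hf hc (hAb.insert b) hε
  obtain ⟨σ, a, ha, rfl⟩ := mem_iUnion.1 (subset_iUnion_wordMap_image hA k hx)
  exact ⟨wordMap f k σ b, mapsTo_wordMap hfB k σ hb,
    hk σ a (mem_insert_of_mem b ha) b (mem_insert b A)⟩

theorem exists_wordMap_image_subset (hf : ∀ i, LipschitzWith (c i) (f i))
    (hc : ∀ i, c i < 1) {K U : Set X} (hK : K ⊆ ⋃ i, f i '' K) (hKb : Bornology.IsBounded K)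
    {x : X} (hx : x ∈ K) (hU : U ∈ 𝓝 x) : ∃ k, ∃ σ : Fin k → ι, wordMap f k σ '' K ⊆ U := by
  obtain ⟨ε, hε, hεU⟩ := Metric.mem_nhds_iff.1 hU
  obtain ⟨k, hk⟩ := exists_forall_dist_wordMap_lt hf hc hKb hε
  obtain ⟨σ, y, hy, rfl⟩ := mem_iUnion.1 (subset_iUnion_wordMap_image hK k hx)
  exact ⟨k, σ, image_subset_iff.2 fun z hz => hεU (hk σ z hz y hy)⟩

end Metric

section Similarity

variable {X Y : Type*} [MetricSpace X] [MetricSpace Y] {f : X → Y} {r : ℝ≥0}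

theorem lipschitzWith_of_dist_eq (hf : ∀ x y, dist (f x) (f y) = r * dist x y) :
    LipschitzWith r f :=
  .of_dist_le_mul fun x y => (hf x y).le

theorem antilipschitzWith_inv_of_dist_eq (hr : r ≠ 0)
    (hf : ∀ x y, dist (f x) (f y) = r * dist x y) : AntilipschitzWith r⁻¹ f :=
  AntilipschitzWith.of_le_mul_dist fun x y => by
    rw [hf, NNReal.coe_inv, inv_mul_cancel_left₀ (by exact_mod_cast hr)]

theorem hausdorffMeasure_image_of_dist_eq [MeasurableSpace X] [BorelSpace X]
    [MeasurableSpace Y] [BorelSpace Y] (hr : r ≠ 0)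
    (hf : ∀ x y, dist (f x) (f y) = r * dist x y) {d : ℝ} (hd : 0 ≤ d) (A : Set X) :
    μH[d] (f '' A) = (r : ℝ≥0∞) ^ d * μH[d] A := by
  refine le_antisymm
    ((lipschitzWith_of_dist_eq hf).hausdorffMeasure_image_le hd A) ?_
  calc (r : ℝ≥0∞) ^ d * μH[d] A
      ≤ (r : ℝ≥0∞) ^ d * (((r⁻¹ : ℝ≥0) : ℝ≥0∞) ^ d * μH[d] (f '' A)) := by
        gcongr
        exact (antilipschitzWith_inv_of_dist_eq hr hf).le_hausdorffMeasure_image hd A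
    _ = μH[d] (f '' A) := by
        rw [← mul_assoc, ← ENNReal.mul_rpow_of_nonneg _ _ hd, ← ENNReal.coe_mul,
          mul_inv_cancel₀ hr, ENNReal.coe_one, ENNReal.one_rpow, one_mul]

end Similarity

section OpenSetCondition

variable {ι X : Type*}

structure OpenSetCondition [TopologicalSpace X] (s : ι → X → X) (O : Set X) : Prop where
  isOpen : IsOpen O
  mapsTo : ∀ i, MapsTo (s i) O O
  pairwise_disjoint : Pairwise (Disjoint on fun i => s i '' O)

theorem OpenSetCondition.frontier_subset_iUnion_image [TopologicalSpace X] {s : ι → X → X}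
    {O : Set X} (hO : OpenSetCondition s O) (hK : closure O ⊆ ⋃ i, s i '' closure O) :
    frontier O ⊆ ⋃ i, s i '' frontier O := by
  rw [hO.isOpen.frontier_eq]
  rintro x ⟨hxK, hxO⟩
  obtain ⟨i, y, hyK, rfl⟩ := mem_iUnion.1 (hK hxK)
  exact mem_iUnion.2 ⟨i, y, ⟨hyK, fun hyO => hxO (hO.mapsTo i hyO)⟩, rfl⟩

variable {E : Type*} [Fintype ι] [NormedAddCommGroup E] [NormedSpace ℝ E]
  [FiniteDimensional ℝ E] [MeasurableSpace E] [BorelSpace E] {s : ι → E → E} {ρ : ι → ℝ≥0}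
  {O : Set E}

/-- The pieces `s i '' O` fill `O` up to a `μH[finrank ℝ E]`-null set, and the open set
`O \ ⋃ i, s i '' closure O` inside it must then be empty. -/
theorem OpenSetCondition.closure_subset_iUnion_image (hO : OpenSetCondition s O)
    (hOb : Bornology.IsBounded O) (hρ : ∀ i, ρ i ≠ 0)
    (hs : ∀ i x y, dist (s i x) (s i y) = ρ i * dist x y) (hsum : ∑ i, ρ i ^ finrank ℝ E = 1) :
    closure O ⊆ ⋃ i, s i '' closure O := by
  set μ : Measure E := μH[finrank ℝ E]
  have hlip (i) := lipschitzWith_of_dist_eq (hs i)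
  have hmeas (i) : MeasurableSet (s i '' O) :=
    (((antilipschitzWith_inv_of_dist_eq (hρ i) (hs i)).isClosedEmbedding
      (hlip i).uniformContinuous).measurableEmbedding.measurableSet_image).2
      hO.isOpen.measurableSet
  have hunion : μ (⋃ i, s i '' O) = μ O := by
    rw [measure_iUnion hO.pairwise_disjoint hmeas, tsum_fintype]
    simp_rw [μ, hausdorffMeasure_image_of_dist_eq (hρ _) (hs _) (Nat.cast_nonneg _),
      ENNReal.rpow_natCast, ← Finset.sum_mul, ← ENNReal.coe_pow, ← ENNReal.ofNNReal_finsetSum,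
      hsum, ENNReal.coe_one, one_mul]
  have hnull : μ (O \ ⋃ i, s i '' O) = 0 := by
    rw [measure_sdiff (iUnion_subset fun i => (hO.mapsTo i).image_subset)
      (MeasurableSet.iUnion hmeas).nullMeasurableSet (hunion ▸ hOb.measure_lt_top.ne), hunion,
      tsub_self]
  have hclosed : IsClosed (⋃ i, s i '' closure O) :=
    isClosed_iUnion_of_finite fun i =>
      (hOb.isCompact_closure.image (hlip i).continuous).isClosed
  refine closure_minimal ?_ hclosed
  rw [← sdiff_eq_empty, ← (hO.isOpen.sdiff hclosed).measure_eq_zero_iff μ]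
  exact measure_mono_null
    (sdiff_subset_sdiff_right (iUnion_mono fun i => image_mono subset_closure)) hnull

theorem OpenSetCondition.eq_closure (hO : OpenSetCondition s O) (hOne : O.Nonempty)
    (hOb : Bornology.IsBounded O) (hρ0 : ∀ i, 0 < ρ i) (hρ1 : ∀ i, ρ i < 1)
    (hs : ∀ i x y, dist (s i x) (s i y) = ρ i * dist x y) (hsum : ∑ i, ρ i ^ finrank ℝ E = 1)
    {Γ : Set E} (hΓ : IsCompact Γ) (hΓne : Γ.Nonempty) (hΓs : Γ = ⋃ i, s i '' Γ) :
    Γ = closure O := by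
  have hlip (i) := lipschitzWith_of_dist_eq (hs i)
  refine (subset_of_subset_iUnion_image hlip hρ1 hΓs.subset hΓ.isBounded isClosed_closure
    (hOne.mono subset_closure) fun i => (hO.mapsTo i).closure (hlip i).continuous).antisymm ?_
  refine subset_of_subset_iUnion_image hlip hρ1
    (hO.closure_subset_iUnion_image hOb (fun i => (hρ0 i).ne') hs hsum) hOb.closure
    hΓ.isClosed hΓne fun i => ?_
  exact (mapsTo_image (s i) Γ).mono_right ((subset_iUnion (fun i => s i '' Γ) i).trans
    hΓs.symm.subset)

theorem OpenSetCondition.dimH_frontier_lt_finrank [Nontrivial E] (hO : OpenSetCondition s O)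
    (hOne : O.Nonempty) (hOb : Bornology.IsBounded O) (hρ0 : ∀ i, 0 < ρ i)
    (hρ1 : ∀ i, ρ i < 1) (hs : ∀ i x y, dist (s i x) (s i y) = ρ i * dist x y)
    (hsum : ∑ i, ρ i ^ finrank ℝ E = 1) : dimH (frontier O) < finrank ℝ E := by
  have hlip (i) := lipschitzWith_of_dist_eq (hs i)
  have hK := hO.closure_subset_iUnion_image hOb (fun i => (hρ0 i).ne') hs hsum
  obtain ⟨x, hx⟩ := hOne
  obtain ⟨k, w, hw⟩ := exists_wordMap_image_subset hlip hρ1 hK hOb.closure (subset_closure hx)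
    (hO.isOpen.mem_nhds hx)
  have hdisj : Disjoint (frontier O) (wordMap s k w '' frontier O) := by
    rw [hO.isOpen.frontier_eq]
    exact disjoint_sdiff_left.mono_right ((image_mono sdiff_subset).trans hw)
  simpa using dimH_lt_of_disjoint_wordMap_image hlip hρ0 hρ1 (t := finrank ℝ E)
    (by simpa using finrank_pos) (by simpa using hsum) (hO.frontier_subset_iUnion_image hK)
    (hOb.closure.subset frontier_subset_closure).ediam_ne_top w hdisj

end OpenSetCondition

end IFS

theorem statement2_general
    (n : ℕ) (hn : 1 ≤ n)
    (M : ℕ)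
    (s : Fin M → EuclideanSpace ℝ (Fin n) → EuclideanSpace ℝ (Fin n))
    (ρ : Fin M → ℝ)
    (hρ : ∀ m, ρ m ∈ Set.Ioo (0 : ℝ) 1)
    (hsim : ∀ m x y, dist (s m x) (s m y) = ρ m * dist x y)
    (Γ : Set (EuclideanSpace ℝ (Fin n)))
    (hΓne : Γ.Nonempty) (hΓcomp : IsCompact Γ)
    (hattr : Γ = ⋃ m, s m '' Γ)
    (hsum : ∑ m, ρ m ^ n = 1)
    (O : Set (EuclideanSpace ℝ (Fin n)))
    (hOne : O.Nonempty) (hOopen : IsOpen O) (hObdd : Bornology.IsBounded O)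
    (hOSC1 : (⋃ m, s m '' O) ⊆ O)
    (hOSC2 : ∀ m m' : Fin M, m ≠ m' → Disjoint (s m '' O) (s m' '' O)) :
    dimH (frontier O) < (n : ℝ≥0∞) ∧ volume (frontier O) = 0 ∧
    dimH (frontier Γ) < (n : ℝ≥0∞) ∧ volume (frontier Γ) = 0 := by
  lift ρ to Fin M → ℝ≥0 using fun m => (hρ m).1.le
  beta_reduce at hρ hsim hsum
  have : Nonempty (Fin n) := ⟨⟨0, hn⟩⟩
  have hρ0 (m) : 0 < ρ m := by exact_mod_cast (hρ m).1
  have hρ1 (m) : ρ m < 1 := by exact_mod_cast (hρ m).2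
  have hsum' : ∑ m, ρ m ^ finrank ℝ (EuclideanSpace ℝ (Fin n)) = 1 := by
    rw [finrank_euclideanSpace_fin]
    exact_mod_cast hsum
  have hO : IFS.OpenSetCondition s O :=
    ⟨hOopen, fun m x hx => hOSC1 (mem_iUnion_of_mem m (mem_image_of_mem _ hx)), hOSC2⟩
  have hdim : dimH (frontier O) < n := by
    simpa using hO.dimH_frontier_lt_finrank hOne hObdd hρ0 hρ1 hsim hsum'
  have hvol : volume (frontier O) = 0 := measure_zero_of_dimH_lt (d := n)
    (by simpa using Measure.absolutelyContinuous_isAddHaarMeasure volume μH[n])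
    (by simpa using hdim)
  have hfr : frontier Γ ⊆ frontier O :=
    hO.eq_closure hOne hObdd hρ0 hρ1 hsim hsum' hΓcomp hΓne hattr ▸ frontier_closure_subset
  exact ⟨hdim, hvol, (dimH_mono hfr).trans_lt hdim, measure_mono_null hfr hvol⟩

/-- If Γ is an n-attractor with defining IFS s₁,…,s_M and O is any
non-empty bounded open set satisfying the OSC for this IFS, then dim_H(∂O) < n,
so |∂O| = 0; consequently also dim_H(∂Γ) < n and |∂Γ| = 0. -/
theorem statement2
    (n : ℕ) (hn : 1 ≤ n)
    (M : ℕ) (hM : 2 ≤ M)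
    (s : Fin M → EuclideanSpace ℝ (Fin n) → EuclideanSpace ℝ (Fin n))
    (ρ : Fin M → ℝ)
    (hρ : ∀ m, ρ m ∈ Set.Ioo (0 : ℝ) 1)
    (hsim : ∀ m x y, dist (s m x) (s m y) = ρ m * dist x y)
    (Γ : Set (EuclideanSpace ℝ (Fin n)))
    (hΓne : Γ.Nonempty) (hΓcomp : IsCompact Γ)
    (hattr : Γ = ⋃ m, s m '' Γ)
    (hsum : ∑ m, ρ m ^ n = 1)
    (O : Set (EuclideanSpace ℝ (Fin n)))
    (hOne : O.Nonempty) (hOopen : IsOpen O) (hObdd : Bornology.IsBounded O)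
    (hOSC1 : (⋃ m, s m '' O) ⊆ O)
    (hOSC2 : ∀ m m' : Fin M, m ≠ m' → Disjoint (s m '' O) (s m' '' O)) :
    dimH (frontier O) < (n : ℝ≥0∞) ∧ volume (frontier O) = 0 ∧
    dimH (frontier Γ) < (n : ℝ≥0∞) ∧ volume (frontier Γ) = 0 :=
  statement2_general n hn M s ρ hρ hsim Γ hΓne hΓcomp hattr hsum O hOne hOopen hObdd hOSC1 hOSC2
end

section
/- Let Ω ⊊ ℝⁿ be a domain (non-empty open set), and let s ∈ (0,n) satisfy the Aikawa condition for ∂Ω, i.e., there exists c > 0 such that ∫_{B(x,r)} dist(y,∂Ω)^{s−n} dy ≤ c·r^s for all x ∈ ∂Ω and all r > 0. Then Ω belongs to the class D^t for every t with 0 < t < 1 and t ≤ n − s. -/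
open Metric MeasureTheory Set
open scoped ENNReal

/-- Let Ω ⊊ ℝⁿ be a domain and let s ∈ (0,n) satisfy the Aikawa
condition for ∂Ω (∃ c > 0 with ∫_{B(x,r)} dist(y,∂Ω)^{s−n} dy ≤ c·rˢ for all
x ∈ ∂Ω, r > 0). Then Ω ∈ D^t for all t with 0 < t < 1 and t ≤ n − s; i.e.,
∃ C > 0 with ∫_{B(x,r)∖∂Ω} dist(y,∂Ω)^{−t} dy ≤ C·r^{n−t} for all x ∈ ∂Ω and
0 < r ≤ 1. (Powers of the distance are taken in ℝ≥0∞, so that 0^{s−n} = ∞ for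
s < n and 0^0 = 1, matching the stated convention.) -/
theorem statement11
    (n : ℕ) (hn : 1 ≤ n)
    (Ω : Set (EuclideanSpace ℝ (Fin n)))
    (hΩopen : IsOpen Ω) (hΩne : Ω.Nonempty) (hΩproper : Ω ≠ Set.univ)
    (s : ℝ) (hs0 : 0 < s) (hsn : s < n)
    (c : ℝ) (hc : 0 < c)
    (hAikawa : ∀ x ∈ frontier Ω, ∀ r : ℝ, 0 < r →
      (∫⁻ y in Metric.closedBall x r,
        ENNReal.ofReal (Metric.infDist y (frontier Ω)) ^ (s - (n : ℝ)))
        ≤ ENNReal.ofReal (c * r ^ s)) :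
    ∀ t : ℝ, 0 < t → t < 1 → t ≤ (n : ℝ) - s →
      ∃ C : ℝ, 0 < C ∧ ∀ x ∈ frontier Ω, ∀ r : ℝ, 0 < r → r ≤ 1 →
        (∫⁻ y in Metric.closedBall x r \ frontier Ω,
          ENNReal.ofReal (Metric.infDist y (frontier Ω)) ^ (-t))
          ≤ ENNReal.ofReal (C * r ^ ((n : ℝ) - t)) := by
  intro t ht0 ht1 hts
  refine ⟨c, hc, ?_⟩
  intro x hx r hr hr1
  set F := frontier Ω with hF
  have hFclosed : IsClosed F := isClosed_frontier
  have hexp : 0 ≤ (n : ℝ) - s - t := by linarith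
  -- pointwise bound on the set
  have hpt : ∀ y ∈ Metric.closedBall x r \ F,
      ENNReal.ofReal (Metric.infDist y F) ^ (-t)
        ≤ ENNReal.ofReal (Metric.infDist y F) ^ (s - (n : ℝ))
            * ENNReal.ofReal r ^ ((n : ℝ) - s - t) := by
    intro y hy
    have hyball : y ∈ Metric.closedBall x r := hy.1
    have hyF : y ∉ F := hy.2
    have hdpos : 0 < Metric.infDist y F := by
      rw [← hFclosed.notMem_iff_infDist_pos ⟨x, hx⟩]
      exact hyF
    have hdle : Metric.infDist y F ≤ r :=
      le_trans (Metric.infDist_le_dist_of_mem hx) (Metric.mem_closedBall.mp hyball)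
    have hne0 : ENNReal.ofReal (Metric.infDist y F) ≠ 0 := by
      simp [ENNReal.ofReal_eq_zero, not_le, hdpos]
    have hnetop : ENNReal.ofReal (Metric.infDist y F) ≠ ⊤ := ENNReal.ofReal_ne_top
    have hsplit : ENNReal.ofReal (Metric.infDist y F) ^ (-t)
        = ENNReal.ofReal (Metric.infDist y F) ^ (s - (n : ℝ))
            * ENNReal.ofReal (Metric.infDist y F) ^ ((n : ℝ) - s - t) := by
      rw [← ENNReal.rpow_add _ _ hne0 hnetop]
      ring_nf
    rw [hsplit]
    exact mul_le_mul_right (ENNReal.rpow_le_rpow (ENNReal.ofReal_le_ofReal hdle) hexp) _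
  have hmeas : MeasurableSet (Metric.closedBall x r \ F) :=
    (Metric.isClosed_closedBall.measurableSet).diff hFclosed.measurableSet
  calc (∫⁻ y in Metric.closedBall x r \ F,
          ENNReal.ofReal (Metric.infDist y F) ^ (-t))
      ≤ ∫⁻ y in Metric.closedBall x r \ F,
          ENNReal.ofReal (Metric.infDist y F) ^ (s - (n : ℝ))
            * ENNReal.ofReal r ^ ((n : ℝ) - s - t) :=
        setLIntegral_mono' hmeas hpt
    _ ≤ ∫⁻ y in Metric.closedBall x r,
          ENNReal.ofReal (Metric.infDist y F) ^ (s - (n : ℝ))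
            * ENNReal.ofReal r ^ ((n : ℝ) - s - t) :=
        lintegral_mono_set Set.diff_subset
    _ = (∫⁻ y in Metric.closedBall x r,
          ENNReal.ofReal (Metric.infDist y F) ^ (s - (n : ℝ)))
            * ENNReal.ofReal r ^ ((n : ℝ) - s - t) := by
        apply lintegral_mul_const'
        exact ENNReal.rpow_ne_top_of_nonneg hexp ENNReal.ofReal_ne_top
    _ ≤ ENNReal.ofReal (c * r ^ s) * ENNReal.ofReal r ^ ((n : ℝ) - s - t) :=
        mul_le_mul_left (hAikawa x hx r hr) _
    _ = ENNReal.ofReal (c * r ^ ((n : ℝ) - t)) := by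
        rw [ENNReal.ofReal_rpow_of_pos hr, ← ENNReal.ofReal_mul (by positivity)]
        congr 1
        rw [mul_assoc, ← Real.rpow_add hr]
        ring_nf
end

section
/- Let Ω ⊊ ℝⁿ be an E-thick domain whose boundary ∂Ω is porous (satisfies the ball condition). Then Ω is E-porous. -/
open Metric MeasureTheory Set

/-- The infimal Euclidean distance between two sets. -/
noncomputable def setDist {n : ℕ} (A B : Set (EuclideanSpace ℝ (Fin n))) : ℝ :=
  sInf (Set.image2 dist A B)

/-- `Q` is an open axis-parallel cube of side length `l`. -/
def IsCube {n : ℕ} (Q : Set (EuclideanSpace ℝ (Fin n))) (l : ℝ) : Prop :=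
  0 < l ∧ ∃ a : EuclideanSpace ℝ (Fin n),
    Q = {y : EuclideanSpace ℝ (Fin n) | ∀ i, y i ∈ Set.Ioo (a i) (a i + l)}

/-- Ω is E-thick (exterior thick) in the sense of Triebel. -/
def EThick {n : ℕ} (Ω : Set (EuclideanSpace ℝ (Fin n))) : Prop :=
  ∀ c₁ c₂ c₃ c₄ : ℝ, 0 < c₁ → 0 < c₂ → 0 < c₃ → 0 < c₄ → ∀ j₀ : ℕ,
    ∃ c₅ c₆ c₇ c₈ : ℝ, 0 < c₅ ∧ 0 < c₆ ∧ 0 < c₇ ∧ 0 < c₈ ∧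
      ∀ j : ℕ, j₀ ≤ j → ∀ (Qi : Set (EuclideanSpace ℝ (Fin n))) (li : ℝ),
        IsCube Qi li → Qi ⊆ Ω →
        c₁ * 2 ^ (-(j : ℤ)) ≤ li → li ≤ c₂ * 2 ^ (-(j : ℤ)) →
        c₃ * 2 ^ (-(j : ℤ)) ≤ setDist Qi (frontier Ω) →
        setDist Qi (frontier Ω) ≤ c₄ * 2 ^ (-(j : ℤ)) →
        ∃ (Qe : Set (EuclideanSpace ℝ (Fin n))) (l' : ℝ),
          IsCube Qe l' ∧ Qe ⊆ Ωᶜ ∧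
          c₅ * 2 ^ (-(j : ℤ)) ≤ l' ∧ l' ≤ c₆ * 2 ^ (-(j : ℤ)) ∧
          c₇ * 2 ^ (-(j : ℤ)) ≤ setDist Qe (frontier Ω) ∧
          setDist Qe (frontier Ω) ≤ setDist Qi Qe ∧
          setDist Qi Qe ≤ c₈ * 2 ^ (-(j : ℤ))

/-- A closed set F ⊆ ℝⁿ is porous (satisfies the ball condition). -/
def IsPorousSet {n : ℕ} (F : Set (EuclideanSpace ℝ (Fin n))) : Prop :=
  ∃ η : ℝ, 0 < η ∧ η < 1 ∧
    ∀ x : EuclideanSpace ℝ (Fin n), ∀ r : ℝ, 0 < r → r < 1 →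
      ∃ y : EuclideanSpace ℝ (Fin n),
        Metric.closedBall y (η * r) ⊆ Metric.closedBall x r ∧
        Metric.closedBall y (η * r) ∩ F = ∅

/-- A domain Ω ⊊ ℝⁿ is E-porous. -/
def EPorous {n : ℕ} (Ω : Set (EuclideanSpace ℝ (Fin n))) : Prop :=
  ∃ η : ℝ, 0 < η ∧ η < 1 ∧
    ∀ x ∈ frontier Ω, ∀ r : ℝ, 0 < r → r < 1 →
      ∃ y : EuclideanSpace ℝ (Fin n),
        Metric.closedBall y (η * r) ⊆ Metric.closedBall x r ∧
        Metric.closedBall y (η * r) ∩ closure Ω = ∅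

/-!
Fix `x ∈ ∂Ω` and a scale `r`, and put `s = r / K`. Porosity of `∂Ω` gives a ball
`B(y, η s) ⊆ B(x, s)` missing `∂Ω`; being connected, it lies either outside `cl Ω`, and we are
done, or inside `Ω`. In the second case a cube of side `≈ η s` centred at `y` lies in `Ω` at
distance `≈ s` from `∂Ω`, so E-thickness at the dyadic scale `2⁻ʲ ≈ s` yields an exterior cube of
size `≲ s`, at distance `≳ s` from `∂Ω` and `≲ s` from `x`. A ball of radius `≈ s` about its centre
misses `cl Ω` and stays inside `B(x, r)`.
-/

lemma bddBelow_image2_dist {α : Type*} [PseudoMetricSpace α] (A B : Set α) :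
    BddBelow (image2 dist A B) :=
  ⟨0, by rintro _ ⟨a, -, b, -, rfl⟩; exact dist_nonneg⟩

section SetDist

variable {n : ℕ} {A B : Set (EuclideanSpace ℝ (Fin n))}

lemma setDist_le_dist {a b : EuclideanSpace ℝ (Fin n)} (ha : a ∈ A) (hb : b ∈ B) :
    setDist A B ≤ dist a b :=
  csInf_le (bddBelow_image2_dist A B) (mem_image2_of_mem ha hb)

lemma le_setDist {m : ℝ} (hA : A.Nonempty) (hB : B.Nonempty)
    (h : ∀ a ∈ A, ∀ b ∈ B, m ≤ dist a b) : m ≤ setDist A B :=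
  le_csInf (hA.image2 hB) (by rintro _ ⟨a, ha, b, hb, rfl⟩; exact h a ha b hb)

lemma exists_dist_lt_of_setDist_lt {c : ℝ} (hA : A.Nonempty) (hB : B.Nonempty)
    (h : setDist A B < c) : ∃ a ∈ A, ∃ b ∈ B, dist a b < c := by
  obtain ⟨_, ⟨a, ha, b, hb, rfl⟩, hlt⟩ :=
    (csInf_lt_iff (bddBelow_image2_dist A B) (hA.image2 hB)).1 h
  exact ⟨a, ha, b, hb, hlt⟩

end SetDist

lemma EuclideanSpace.dist_le_sqrt_card_mul {ι : Type*} [Fintype ι] {x y : EuclideanSpace ℝ ι}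
    {b : ℝ} (hb : 0 ≤ b) (h : ∀ i, |x i - y i| ≤ b) :
    dist x y ≤ √(Fintype.card ι) * b := by
  have hsum : ∑ i, dist (x i) (y i) ^ 2 ≤ Fintype.card ι * b ^ 2 := by
    calc ∑ i, dist (x i) (y i) ^ 2 ≤ ∑ _i : ι, b ^ 2 := by
          gcongr with i
          rw [Real.dist_eq]
          exact h i
      _ = Fintype.card ι * b ^ 2 := by simp
  calc dist x y = √(∑ i, dist (x i) (y i) ^ 2) := EuclideanSpace.dist_eq x y
    _ ≤ √(Fintype.card ι * b ^ 2) := Real.sqrt_le_sqrt hsum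
    _ = √(Fintype.card ι) * b := by rw [Real.sqrt_mul (Nat.cast_nonneg _), Real.sqrt_sq hb]

section Cube

variable {n : ℕ}

def openCube (a : EuclideanSpace ℝ (Fin n)) (l : ℝ) : Set (EuclideanSpace ℝ (Fin n)) :=
  {y | ∀ i, y i ∈ Ioo (a i) (a i + l)}

lemma center_mem_openCube (a : EuclideanSpace ℝ (Fin n)) {l : ℝ} (hl : 0 < l) :
    WithLp.toLp 2 (fun i => a i + l / 2) ∈ openCube a l :=
  fun i => ⟨by simp [hl], by simp; linarith⟩

lemma openCube_subset_closedBall_center (a : EuclideanSpace ℝ (Fin n)) {l : ℝ} (hl : 0 ≤ l) :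
    openCube a l ⊆ closedBall (WithLp.toLp 2 (fun i => a i + l / 2)) (√n * (l / 2)) := by
  intro y hy
  have hdist := EuclideanSpace.dist_le_sqrt_card_mul (x := y)
    (y := WithLp.toLp 2 (fun i => a i + l / 2)) (b := l / 2) (by positivity) fun i =>
      abs_le.2 ⟨by simp; linarith [(hy i).1], by simp; linarith [(hy i).2]⟩
  rwa [Fintype.card_fin] at hdist

lemma IsCube.exists_center {Q : Set (EuclideanSpace ℝ (Fin n))} {l : ℝ} (hQ : IsCube Q l) :
    ∃ c ∈ Q, Q ⊆ closedBall c (√n * (l / 2)) := by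
  obtain ⟨hl, a, rfl⟩ := hQ
  exact ⟨_, center_mem_openCube a hl, openCube_subset_closedBall_center a hl.le⟩

lemma exists_isCube_subset_closedBall (c : EuclideanSpace ℝ (Fin n)) {l : ℝ} (hl : 0 < l) :
    ∃ Q, IsCube Q l ∧ c ∈ Q ∧ Q ⊆ closedBall c (√n * (l / 2)) := by
  set a : EuclideanSpace ℝ (Fin n) := WithLp.toLp 2 (fun i => c i - l / 2)
  have hc : WithLp.toLp 2 (fun i => a i + l / 2) = c := by ext i; simp [a]
  exact ⟨openCube a l, ⟨hl, a, rfl⟩, hc ▸ center_mem_openCube a hl,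
    hc ▸ openCube_subset_closedBall_center a hl.le⟩

end Cube

lemma IsPreconnected.subset_interior_or_subset_compl_closure {X : Type*} [TopologicalSpace X]
    {s t : Set X} (hs : IsPreconnected s) (h : Disjoint s (frontier t)) :
    s ⊆ interior t ∨ s ⊆ (closure t)ᶜ := by
  refine hs.subset_or_subset isOpen_interior isClosed_closure.isOpen_compl
    (disjoint_compl_right.mono_left interior_subset_closure) fun p hp => ?_
  by_cases hint : p ∈ interior t
  · exact Or.inl hint
  · exact Or.inr fun hcl => h.notMem_of_mem_left hp ⟨hcl, hint⟩

lemma exists_zpow_two_neg_mem_Icc {s : ℝ} (hs0 : 0 < s) (hs1 : s ≤ 1) :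
    ∃ j : ℕ, (2 : ℝ) ^ (-(j : ℤ)) ∈ Icc s (2 * s) := by
  obtain ⟨j, hle, hlt⟩ := exists_nat_pow_near (one_le_one_div hs0 hs1) one_lt_two
  refine ⟨j, ?_, ?_⟩
  all_goals rw [zpow_neg, zpow_natCast]
  · rw [le_inv_comm₀ hs0 (by positivity)]
    rwa [one_div] at hle
  · rw [pow_succ, div_lt_iff₀ hs0] at hlt
    rw [inv_le_iff_one_le_mul₀ (by positivity)]
    nlinarith

lemma closedBall_subset_compl_closure_of_notMem {E : Type*} [NormedAddCommGroup E]
    [NormedSpace ℝ E] {Ω : Set E} {z : E} {ρ : ℝ} (hρ : 0 ≤ ρ) (hz : z ∉ Ω)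
    (h : ∀ w ∈ frontier Ω, ρ < dist z w) : closedBall z ρ ⊆ (closure Ω)ᶜ := by
  have hdisj : Disjoint (closedBall z ρ) (frontier Ω) :=
    disjoint_left.2 fun p hp hpF => (mem_closedBall'.1 hp).not_gt (h p hpF)
  refine ((convex_closedBall z ρ).isPreconnected.subset_interior_or_subset_compl_closure
    hdisj).resolve_left fun hint => hz ?_
  exact interior_subset (hint (mem_closedBall_self hρ))

lemma exists_isCube_near_frontier {n : ℕ} {Ω : Set (EuclideanSpace ℝ (Fin n))}
    {x y : EuclideanSpace ℝ (Fin n)} {η s : ℝ} (hη : 0 < η) (hs : 0 < s)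
    (hx : x ∈ frontier Ω) (hyx : dist y x ≤ s) (hy : closedBall y (η * s) ⊆ interior Ω) :
    ∃ Q, IsCube Q (η * s / (√n + 1)) ∧ y ∈ Q ∧ Q ⊆ closedBall y (η * s / 2) ∧ Q ⊆ Ω ∧
      η * s / 2 ≤ setDist Q (frontier Ω) ∧ setDist Q (frontier Ω) ≤ s := by
  obtain ⟨Q, hQ, hyQ, hQy⟩ := exists_isCube_subset_closedBall y (l := η * s / (√n + 1))
    (by positivity)
  have hrad : √n * (η * s / (√n + 1) / 2) ≤ η * s / 2 := by
    rw [mul_div_assoc', mul_div_assoc', div_le_div_iff_of_pos_right two_pos,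
      div_le_iff₀ (by positivity)]
    nlinarith [Real.sqrt_nonneg n, mul_pos hη hs]
  have hQy : Q ⊆ closedBall y (η * s / 2) := hQy.trans (closedBall_subset_closedBall hrad)
  have hQΩ : Q ⊆ Ω := (hQy.trans (closedBall_subset_closedBall (by linarith [mul_pos hη hs]))).trans
    (hy.trans interior_subset)
  refine ⟨Q, hQ, hyQ, hQy, hQΩ, le_setDist ⟨y, hyQ⟩ ⟨x, hx⟩ fun p hp w hw => ?_,
    (setDist_le_dist hyQ hx).trans hyx⟩
  have hwy : η * s < dist w y := not_le.1 fun hle => hw.2 (hy (mem_closedBall.2 hle))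
  have hpy := mem_closedBall.1 (hQy hp)
  linarith [dist_triangle w p y, dist_comm p w]

lemma EThick.exists_closedBall_subset_compl_closure {n : ℕ} {Ω : Set (EuclideanSpace ℝ (Fin n))}
    (hΩ : EThick Ω) {η : ℝ} (hη : 0 < η) :
    ∃ K c : ℝ, 1 ≤ K ∧ 0 < c ∧ ∀ x ∈ frontier Ω, ∀ y s, 0 < s → s ≤ 1 → dist y x ≤ s →
      closedBall y (η * s) ⊆ interior Ω →
      ∃ z, closedBall z (c * s) ⊆ closedBall x (K * s) ∧ closedBall z (c * s) ⊆ (closure Ω)ᶜ := by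
  -- The constants c₁, …, c₄ fit the cube of `exists_isCube_near_frontier` at any `s ≤ 2⁻ʲ ≤ 2s`.
  obtain ⟨_, c₆, c₇, c₈, -, hc₆, hc₇, hc₈, hthick⟩ :=
    hΩ (η / (2 * (√n + 1))) η (η / 4) 1 (by positivity) hη (by positivity) one_pos 0
  refine ⟨c₇ / 2 + √n * c₆ + 4 * c₈ + η / 2 + 1, c₇ / 2, le_add_of_nonneg_left (by positivity),
    by positivity, ?_⟩
  intro x hx y s hs hs1 hyx hy
  obtain ⟨j, hsδ, hδs⟩ := exists_zpow_two_neg_mem_Icc hs hs1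
  specialize hthick j j.zero_le
  generalize (2 : ℝ) ^ (-(j : ℤ)) = δ at hsδ hδs hthick
  obtain ⟨Qi, hQi, hyQi, hQiy, hQiΩ, hQiF, hQiF'⟩ := exists_isCube_near_frontier hη hs hx hyx hy
  have hl₁ : η / (2 * (√n + 1)) * δ ≤ η * s / (√n + 1) :=
    calc η / (2 * (√n + 1)) * δ ≤ η / (2 * (√n + 1)) * (2 * s) := by gcongr
      _ = η * s / (√n + 1) := by field_simp
  have hl₂ : η * s / (√n + 1) ≤ η * δ :=
    calc η * s / (√n + 1) ≤ η * s := div_le_self (by positivity) (by simp)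
      _ ≤ η * δ := by gcongr
  have hηδ : η / 4 * δ ≤ η * s / 2 := by nlinarith
  obtain ⟨Qe, l, hQe, hQeΩ, -, hl, hQeF, -, hQiQe⟩ :=
    hthick Qi _ hQi hQiΩ hl₁ hl₂ (hηδ.trans hQiF) (by linarith)
  obtain ⟨z, hzQe, hQez⟩ := hQe.exists_center
  obtain ⟨p, hp, q, hq, hpq⟩ := exists_dist_lt_of_setDist_lt ⟨y, hyQi⟩ ⟨z, hzQe⟩
    (hQiQe.trans_lt (by nlinarith : c₈ * δ < 4 * c₈ * s))
  have hqz : dist q z ≤ √n * c₆ * s :=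
    calc dist q z ≤ √n * (l / 2) := hQez hq
      _ ≤ √n * (c₆ * s) := by gcongr; nlinarith
      _ = √n * c₆ * s := by ring
  refine ⟨z, closedBall_subset_closedBall' ?_,
    closedBall_subset_compl_closure_of_notMem (by positivity) (hQeΩ hzQe) fun w hw => ?_⟩
  · have hpy := mem_closedBall.1 (hQiy hp)
    linarith [dist_triangle4 z q p y, dist_triangle z y x, dist_comm z q, dist_comm q p]
  · nlinarith [setDist_le_dist hzQe hw]

theorem statement13_general
    (n : ℕ)
    (Ω : Set (EuclideanSpace ℝ (Fin n)))
    (hEthick : EThick Ω)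
    (hporous : IsPorousSet (frontier Ω)) :
    EPorous Ω := by
  obtain ⟨η, hη0, hη1, hpor⟩ := hporous
  obtain ⟨K, c, hK, hc, hball⟩ := hEthick.exists_closedBall_subset_compl_closure hη0
  refine ⟨min η c / K, by positivity,
    (div_le_self (by positivity) hK).trans_lt ((min_le_left η c).trans_lt hη1),
    fun x hx r hr0 hr1 => ?_⟩
  set s := r / K
  have hs : 0 < s := by positivity
  have hsr : s ≤ r := div_le_self hr0.le hK
  have hKs : K * s = r := mul_div_cancel₀ r (by positivity)
  have hball_of_le : ∀ z ρ, min η c * s ≤ ρ → closedBall z ρ ⊆ closedBall x r →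
      closedBall z ρ ⊆ (closure Ω)ᶜ → ∃ z, closedBall z (min η c / K * r) ⊆ closedBall x r ∧
        closedBall z (min η c / K * r) ∩ closure Ω = ∅ := by
    intro z ρ hρ hzx hzΩ
    have hsub : closedBall z (min η c / K * r) ⊆ closedBall z ρ :=
      closedBall_subset_closedBall (by rw [div_mul_comm, mul_comm]; exact hρ)
    exact ⟨z, hsub.trans hzx,
      disjoint_iff_inter_eq_empty.1 (subset_compl_iff_disjoint_right.1 (hsub.trans hzΩ))⟩
  obtain ⟨y, hyx, hyF⟩ := hpor x s hs (hsr.trans_lt hr1)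
  rcases (convex_closedBall y _).isPreconnected.subset_interior_or_subset_compl_closure
    (disjoint_iff_inter_eq_empty.2 hyF) with hint | hext
  · obtain ⟨z, hzx, hzΩ⟩ := hball x hx y s hs (hsr.trans hr1.le)
      (mem_closedBall.1 (hyx (mem_closedBall_self (by positivity)))) hint
    exact hball_of_le z _ (by gcongr; exact min_le_right η c) (hKs ▸ hzx) hzΩ
  · exact hball_of_le y _ (by gcongr; exact min_le_left η c)
      (hyx.trans (closedBall_subset_closedBall hsr)) hext

/-- An E-thick domain Ω ⊊ ℝⁿ whose boundary is porous (satisfies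
the ball condition) is E-porous. -/
theorem statement13
    (n : ℕ) (hn : 1 ≤ n)
    (Ω : Set (EuclideanSpace ℝ (Fin n)))
    (hΩopen : IsOpen Ω) (hΩne : Ω.Nonempty) (hΩproper : Ω ≠ Set.univ)
    (hEthick : EThick Ω)
    (hporous : IsPorousSet (frontier Ω)) :
    EPorous Ω :=
  statement13_general n Ω hEthick hporous
end
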